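/- arXiv:1307.6830 — 3 statements merged into one kernel-verified Lean document; each statement's English description precedes it below -/
import Mathlib

section
/- Let ξ₁, ..., ξ_x be i.i.d. geometric random variables with parameter 1/2 (taking values in {0,1,2,...} with P[ξᵢ = k] = 2^{-(k+1)}), so that E[ξᵢ] = 1. Then for all positive integers x and y, P[|∑_{i=1}^x (ξᵢ - 1)| ≥ y] ≤ 2·exp(-y²/(6·max(x,y))). -/
/-!
Chernoff's method. A geometric variable `ξ` with parameter `1/2` has moment generating function
`E[e^{tξ}] = 1/(2 - e^t)` for `e^t < 2`, and a fourth-order Taylor estimate of `exp` shows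
`E[e^{t(ξ-1)}] = e^{-t}/(2 - e^t) ≤ e^{40t²/27}` for `|t| ≤ 3/10`. By independence the sum `S` of
`x` centered copies satisfies `P[±S ≥ y] ≤ e^{-ty + 40xt²/27}`, and the choice
`t = 3y/(10 max(x, y))` makes the exponent at most `-y²/(6 max(x, y))`.
-/

open MeasureTheory ProbabilityTheory Real Finset

lemma exp_le_taylor_three_add_quartic {t : ℝ} (ht : |t| ≤ 1) :
    exp t ≤ 1 + t + t ^ 2 / 2 + t ^ 3 / 6 + 5 / 96 * t ^ 4 := by
  have h := (abs_sub_le_iff.1 (Real.exp_bound ht (n := 4) (by norm_num))).1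
  rw [pow_abs, abs_of_nonneg (by positivity : (0 : ℝ) ≤ t ^ 4)] at h
  norm_num [Finset.sum_range_succ, Nat.factorial] at h
  linarith

lemma exp_neg_add_sq_le_two_sub_exp {t : ℝ} (ht : |t| ≤ 3 / 10) :
    exp (-(t + 40 / 27 * t ^ 2)) ≤ 2 - exp t := by
  obtain ⟨hl, hu⟩ := abs_le.1 ht
  have h₁ := exp_le_taylor_three_add_quartic (t := t) (by rw [abs_le]; constructor <;> nlinarith)
  have h₂ := exp_le_taylor_three_add_quartic (t := -(t + 40 / 27 * t ^ 2))
    (by rw [abs_le]; constructor <;> nlinarith)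
  have hband : 0 ≤ (3 / 10 - t) * (3 / 10 + t) := mul_nonneg (by linarith) (by linarith)
  nlinarith [mul_nonneg hband (sq_nonneg t)]

lemma exp_lt_two_of_abs_le {t : ℝ} (ht : |t| ≤ 3 / 10) : exp t < 2 :=
  sub_pos.1 ((exp_pos _).trans_le (exp_neg_add_sq_le_two_sub_exp ht))

lemma exp_neg_div_two_sub_exp_le {t : ℝ} (ht : |t| ≤ 3 / 10) :
    exp (-t) / (2 - exp t) ≤ exp (40 / 27 * t ^ 2) := by
  rw [div_le_iff₀ (sub_pos.2 (exp_lt_two_of_abs_le ht)), ← div_le_iff₀' (exp_pos _), ← exp_sub,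
    show -t - 40 / 27 * t ^ 2 = -(t + 40 / 27 * t ^ 2) by ring]
  exact exp_neg_add_sq_le_two_sub_exp ht

section Geometric

variable {p : unitInterval} {t : ℝ}

lemma geometric_weight_mul_exp (n : ℕ) :
    (1 - p : ℝ) ^ n * p * exp (t * n) = ((1 - p) * exp t) ^ n * p := by
  rw [mul_pow, ← exp_nat_mul]
  ring_nf

lemma integrable_exp_mul_geometricMeasure (hp : p ≠ 0) (ht : (1 - p) * exp t < 1) :
    Integrable (fun n : ℕ ↦ exp (t * n)) (geometricMeasure p) := by
  simp_rw [integrable_geometricMeasure_iff hp, Real.norm_eq_abs, abs_exp, geometric_weight_mul_exp]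
  exact (summable_geometric_of_lt_one (mul_nonneg (by unit_interval) (exp_nonneg t)) ht).mul_right _

lemma mgf_geometricMeasure (hp : p ≠ 0) (ht : (1 - p) * exp t < 1) :
    mgf (fun n : ℕ ↦ (n : ℝ)) (geometricMeasure p) t = p / (1 - (1 - p) * exp t) := by
  simp_rw [mgf, integral_geometricMeasure hp, smul_eq_mul, geometric_weight_mul_exp]
  rw [tsum_mul_right, tsum_geometric_of_lt_one (mul_nonneg (by unit_interval) (exp_nonneg t)) ht,
    inv_mul_eq_div]

end Geometric

noncomputable def unitInterval.half : unitInterval := ⟨2⁻¹, by norm_num, by norm_num⟩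

@[simp]
lemma unitInterval.coe_half : (unitInterval.half : ℝ) = 2⁻¹ := rfl

lemma unitInterval.half_ne_zero : unitInterval.half ≠ 0 := by
  simp [← Subtype.coe_ne_coe]

section GeometricHalf

variable {Ω : Type*} [MeasurableSpace Ω] {P : Measure Ω} {X : Ω → ℕ} {t : ℝ}

lemma hasLaw_geometricMeasure_half (hX : Measurable X)
    (h : ∀ k, P {ω | X ω = k} = 2⁻¹ ^ (k + 1)) :
    HasLaw X (geometricMeasure unitInterval.half) P where
  map_eq := Measure.ext_of_singleton fun k ↦ by
    rw [Measure.map_apply hX (measurableSet_singleton k),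
      geometricMeasure_singleton unitInterval.half_ne_zero]
    change P {ω | X ω = k} = _
    rw [h, unitInterval.coe_half, show (1 : ℝ) - 2⁻¹ = 2⁻¹ by norm_num, ← pow_succ,
      ENNReal.ofReal_pow (by norm_num), ENNReal.ofReal_inv_of_pos two_pos, ENNReal.ofReal_ofNat]

namespace ProbabilityTheory.HasLaw

variable (hX : HasLaw X (geometricMeasure unitInterval.half) P)
include hX

lemma integrable_exp_mul_centered_geometric (ht : exp t < 2) :
    Integrable (fun ω ↦ exp (t * ((X ω : ℝ) - 1))) P := by
  have h := integrable_exp_mul_geometricMeasure unitInterval.half_ne_zero (t := t)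
    (by norm_num; linarith)
  rw [← hX.map_eq, integrable_map_measure (by fun_prop) hX.aemeasurable] at h
  simpa [mul_sub, exp_sub] using h.div_const (exp t)

lemma mgf_centered_geometric (ht : exp t < 2) :
    mgf (fun ω ↦ (X ω : ℝ) - 1) P t = exp (-t) / (2 - exp t) := by
  simp_rw [sub_eq_add_neg, mgf_add_const]
  rw [← Function.comp_def, ← mgf_map hX.aemeasurable (by fun_prop), hX.map_eq,
    mgf_geometricMeasure unitInterval.half_ne_zero (by norm_num; linarith),
    unitInterval.coe_half, mul_neg_one]
  field_simp
  ring

lemma mgf_centered_geometric_le (ht : |t| ≤ 3 / 10) :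
    mgf (fun ω ↦ (X ω : ℝ) - 1) P t ≤ exp (40 / 27 * t ^ 2) :=
  (hX.mgf_centered_geometric (exp_lt_two_of_abs_le ht)).trans_le (exp_neg_div_two_sub_exp_le ht)

end ProbabilityTheory.HasLaw

end GeometricHalf

section Chernoff

variable {Ω ι : Type*} [MeasurableSpace Ω] {μ : Measure Ω} {X : ι → Ω → ℝ} {s : Finset ι}
  {t c : ℝ}

lemma measureReal_sum_ge_le_of_mgf_le (h_indep : iIndepFun X μ) (h_meas : ∀ i, Measurable (X i))
    (ht : 0 ≤ t) (h_int : ∀ i ∈ s, Integrable (fun ω ↦ exp (t * X i ω)) μ)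
    (h_mgf : ∀ i ∈ s, mgf (X i) μ t ≤ exp c) (ε : ℝ) :
    μ.real {ω | ε ≤ ∑ i ∈ s, X i ω} ≤ exp (-t * ε + #s * c) := by
  have := h_indep.isProbabilityMeasure
  calc μ.real {ω | ε ≤ ∑ i ∈ s, X i ω}
      ≤ exp (-t * ε) * mgf (∑ i ∈ s, X i) μ t := by
        simpa only [Finset.sum_apply] using
          measure_ge_le_exp_mul_mgf ε ht (h_indep.integrable_exp_mul_sum h_meas h_int)
    _ ≤ exp (-t * ε) * ∏ _i ∈ s, exp c := by
        rw [h_indep.mgf_sum h_meas]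
        gcongr with i hi
        · exact fun i _ ↦ mgf_nonneg
        · exact h_mgf i hi
    _ = exp (-t * ε + #s * c) := by
        rw [prod_const, ← exp_nat_mul, ← exp_add]

lemma measure_abs_sum_ge_le_of_mgf_le (h_indep : iIndepFun X μ) (h_meas : ∀ i, Measurable (X i))
    (ht : 0 ≤ t) (h_int : ∀ i ∈ s, ∀ u, |u| = t → Integrable (fun ω ↦ exp (u * X i ω)) μ)
    (h_mgf : ∀ i ∈ s, ∀ u, |u| = t → mgf (X i) μ u ≤ exp c) (ε : ℝ) :
    μ {ω | ε ≤ |∑ i ∈ s, X i ω|} ≤ ENNReal.ofReal (2 * exp (-t * ε + #s * c)) := by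
  have := h_indep.isProbabilityMeasure
  have hpos : |t| = t := abs_of_nonneg ht
  have hneg : |-t| = t := by rw [abs_neg, hpos]
  have upper := measureReal_sum_ge_le_of_mgf_le h_indep h_meas ht
    (fun i hi ↦ h_int i hi t hpos) (fun i hi ↦ h_mgf i hi t hpos) ε
  have lower := measureReal_sum_ge_le_of_mgf_le (X := fun i ω ↦ -X i ω)
    (h_indep.comp (fun _ ↦ Neg.neg) fun _ ↦ measurable_neg) (fun i ↦ (h_meas i).neg) ht
    (fun i hi ↦ by simpa only [mul_neg, neg_mul] using h_int i hi (-t) hneg)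
    (fun i hi ↦ by rw [← Pi.neg_def, mgf_neg]; exact h_mgf i hi (-t) hneg) ε
  calc μ {ω | ε ≤ |∑ i ∈ s, X i ω|}
      ≤ μ ({ω | ε ≤ ∑ i ∈ s, X i ω} ∪ {ω | ε ≤ ∑ i ∈ s, -X i ω}) := by
        refine measure_mono fun ω hω ↦ ?_
        simpa only [Set.mem_ofPred_eq, Set.mem_union, sum_neg_distrib, le_abs] using hω
    _ ≤ μ {ω | ε ≤ ∑ i ∈ s, X i ω} + μ {ω | ε ≤ ∑ i ∈ s, -X i ω} := measure_union_le _ _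
    _ = ENNReal.ofReal (μ.real {ω | ε ≤ ∑ i ∈ s, X i ω} + μ.real {ω | ε ≤ ∑ i ∈ s, -X i ω}) := by
        rw [ENNReal.ofReal_add measureReal_nonneg measureReal_nonneg, ofReal_measureReal,
          ofReal_measureReal]
    _ ≤ ENNReal.ofReal (2 * exp (-t * ε + #s * c)) := ENNReal.ofReal_le_ofReal (by linarith)

end Chernoff

theorem geometric_sum_concentration_general
    {Ω : Type*} [MeasurableSpace Ω] (P : Measure Ω)
    (ξ : ℕ → Ω → ℕ) (hmeas : ∀ i, Measurable (ξ i))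
    (hindep : iIndepFun ξ P)
    (hgeom : ∀ i k, P {ω | ξ i ω = k} = (2 : ENNReal)⁻¹ ^ (k + 1))
    (x y : ℕ) (hy : 0 < y) :
    P {ω | (y : ℝ) ≤ |∑ i ∈ Finset.range x, ((ξ i ω : ℝ) - 1)|}
      ≤ ENNReal.ofReal (2 * Real.exp (-(y : ℝ)^2 / (6 * max (x : ℝ) (y : ℝ)))) := by
  set m := max (x : ℝ) y
  have hm : 0 < m := lt_max_of_lt_right (by exact_mod_cast hy)
  set t := 3 * y / (10 * m)
  have ht : 0 ≤ t := by positivity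
  have ht' : t ≤ 3 / 10 := by
    rw [div_le_iff₀ (by positivity)]
    nlinarith [le_max_right (x : ℝ) y]
  have hlaw i := hasLaw_geometricMeasure_half (hmeas i) (hgeom i)
  have hsmall {u : ℝ} (hu : |u| = t) : |u| ≤ 3 / 10 := hu ▸ ht'
  calc _ ≤ ENNReal.ofReal (2 * exp (-t * y + #(range x) * (40 / 27 * t ^ 2))) :=
        measure_abs_sum_ge_le_of_mgf_le
          (hindep.comp (fun _ k ↦ (k : ℝ) - 1) fun _ ↦ measurable_from_nat)
          (fun i ↦ (measurable_from_nat.comp (hmeas i)).sub_const 1) ht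
          (fun i _ u hu ↦ (hlaw i).integrable_exp_mul_centered_geometric
            (exp_lt_two_of_abs_le (hsmall hu)))
          (fun i _ u hu ↦ (hlaw i).mgf_centered_geometric_le (hsmall hu) |>.trans
            (by rw [← sq_abs, hu])) y
    _ ≤ _ := by
      gcongr
      -- `40/27` is the constant for which `t = 3y/(10m)` gives exactly `-y²/(6m)` at `x = m`
      calc -t * y + #(range x) * (40 / 27 * t ^ 2) ≤ -t * y + m * (40 / 27 * t ^ 2) := by
            rw [card_range]
            gcongr
            exact le_max_left _ _
        _ = -(y : ℝ) ^ 2 / (6 * m) := by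
            simp only [t]
            field_simp
            ring

/-- Lemma A.1 (geometric concentration): if `ξ₁,…,ξ_x` are i.i.d. geometric(1/2) random
variables on `ℕ₀` (so `P[ξᵢ = k] = 2^{-(k+1)}`, mean 1), then for all positive integers
`x, y`, `P[|∑_{i=1}^x (ξᵢ - 1)| ≥ y] ≤ 2 exp(-y²/(6 max(x,y)))`. -/
theorem geometric_sum_concentration
    {Ω : Type*} [MeasurableSpace Ω] (P : Measure Ω) [IsProbabilityMeasure P]
    (ξ : ℕ → Ω → ℕ) (hmeas : ∀ i, Measurable (ξ i))
    (hindep : iIndepFun ξ P)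
    (hgeom : ∀ i k, P {ω | ξ i ω = k} = (2 : ENNReal)⁻¹ ^ (k + 1))
    (x y : ℕ) (hx : 0 < x) (hy : 0 < y) :
    P {ω | (y : ℝ) ≤ |∑ i ∈ Finset.range x, ((ξ i ω : ℝ) - 1)|}
      ≤ ENNReal.ofReal (2 * Real.exp (-(y : ℝ)^2 / (6 * max (x : ℝ) (y : ℝ)))) :=
  geometric_sum_concentration_general P ξ hmeas hindep hgeom x y hy
end

section
/- Suppose h: ℕ → (0,∞) is non-increasing, δ > 1, and for every a ∈ (1,2] the limit g(a) := lim_{m→∞} a^{m(δ-1)} h(⌊a^m⌋) exists in (0,∞). Then the limit c := lim_{n→∞} n^{δ-1} h(n) exists in (0,∞). -/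
/-!
Put `F n = n ^ (δ - 1) h n`. For `a > 1` and `a ^ m ≤ n ≤ a ^ (m + 1)`, monotonicity of `h`
traps `F n` between `a ^ (1 - δ)` times the sampled value at index `m + 1` and `a ^ (δ - 1)`
times the sampled value at index `m`, so `limsup F ≤ a ^ (δ - 1) g(a)` and
`a ^ (1 - δ) g(a) ≤ liminf F`. Hence `limsup F ≤ a ^ (2(δ - 1)) liminf F` for every `a ∈ (1, 2]`,
and letting `a ↓ 1` the two agree; `a = 2` shows that the common value is positive.
-/

open Filter Topology Real

section FloorLogb

variable {a x : ℝ}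

theorem pow_floor_logb_le (ha : 1 < a) (hx : 1 ≤ x) : a ^ ⌊logb a x⌋₊ ≤ x :=
  calc a ^ ⌊logb a x⌋₊ = a ^ (⌊logb a x⌋₊ : ℝ) := (rpow_natCast a _).symm
    _ ≤ a ^ logb a x := rpow_le_rpow_of_exponent_le ha.le (Nat.floor_le (logb_nonneg ha hx))
    _ = x := rpow_logb (zero_lt_one.trans ha) ha.ne' (zero_lt_one.trans_le hx)

theorem le_pow_floor_logb_add_one (ha : 1 < a) (hx : 0 < x) : x ≤ a ^ (⌊logb a x⌋₊ + 1) :=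
  calc x = a ^ logb a x := (rpow_logb (zero_lt_one.trans ha) ha.ne' hx).symm
    _ ≤ a ^ ((⌊logb a x⌋₊ + 1 : ℕ) : ℝ) := by
      refine rpow_le_rpow_of_exponent_le ha.le ?_
      exact_mod_cast (Nat.lt_floor_add_one _).le
    _ = a ^ (⌊logb a x⌋₊ + 1) := rpow_natCast a _

theorem tendsto_floor_logb_natCast_atTop (ha : 1 < a) :
    Tendsto (fun n : ℕ => ⌊logb a n⌋₊) atTop atTop :=
  tendsto_nat_floor_atTop.comp ((tendsto_logb_atTop ha).comp tendsto_natCast_atTop_atTop)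

end FloorLogb

/-- `n ^ p h(n)` sampled along `n = ⌊a ^ m⌋`, with `n ^ p` replaced by `(a ^ m) ^ p`. -/
noncomputable def scaledAlongPowers (h : ℕ → ℝ) (p a : ℝ) (m : ℕ) : ℝ :=
  a ^ ((m : ℝ) * p) * h ⌊a ^ m⌋₊

section Sandwich

variable {h : ℕ → ℝ} {p a : ℝ}

theorem rpow_mul_le_mul_scaledAlongPowers (hh : Antitone h) (h0 : ∀ n, 0 ≤ h n) (hp : 0 ≤ p)
    (ha : 1 < a) {m n : ℕ} (hm : a ^ m ≤ n) (hn : (n : ℝ) ≤ a ^ (m + 1)) :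
    (n : ℝ) ^ p * h n ≤ a ^ p * scaledAlongPowers h p a m := by
  have ha0 : 0 < a := zero_lt_one.trans ha
  have hpow : (a ^ (m + 1)) ^ p = a ^ p * a ^ ((m : ℝ) * p) := by
    rw [← rpow_natCast, ← rpow_mul ha0.le, ← rpow_add ha0]
    push_cast
    ring_nf
  calc (n : ℝ) ^ p * h n ≤ (a ^ (m + 1)) ^ p * h ⌊a ^ m⌋₊ :=
        mul_le_mul (rpow_le_rpow n.cast_nonneg hn hp) (hh (Nat.floor_le_of_le hm)) (h0 n)
          (by positivity)
    _ = a ^ p * scaledAlongPowers h p a m := by rw [hpow, scaledAlongPowers, mul_assoc]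

theorem rpow_neg_mul_scaledAlongPowers_succ_le (hh : Antitone h) (h0 : ∀ n, 0 ≤ h n)
    (hp : 0 ≤ p) (ha : 1 < a) {m n : ℕ} (hm : a ^ m ≤ n) (hn : (n : ℝ) ≤ a ^ (m + 1)) :
    a ^ (-p) * scaledAlongPowers h p a (m + 1) ≤ (n : ℝ) ^ p * h n := by
  have ha0 : 0 < a := zero_lt_one.trans ha
  have hpow : a ^ (-p) * a ^ (((m + 1 : ℕ) : ℝ) * p) = (a ^ m) ^ p := by
    rw [← rpow_add ha0, ← rpow_natCast, ← rpow_mul ha0.le]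
    push_cast
    ring_nf
  calc a ^ (-p) * scaledAlongPowers h p a (m + 1) = (a ^ m) ^ p * h ⌊a ^ (m + 1)⌋₊ := by
        rw [scaledAlongPowers, ← mul_assoc, hpow]
    _ ≤ (n : ℝ) ^ p * h n :=
        mul_le_mul (rpow_le_rpow (by positivity) hm hp) (hh (Nat.le_floor hn)) (h0 _)
          (by positivity)

theorem eventually_rpow_mul_le_mul_scaledAlongPowers (hh : Antitone h) (h0 : ∀ n, 0 ≤ h n)
    (hp : 0 ≤ p) (ha : 1 < a) :
    ∀ᶠ n : ℕ in atTop, (n : ℝ) ^ p * h n ≤ a ^ p * scaledAlongPowers h p a ⌊logb a n⌋₊ := by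
  filter_upwards [eventually_ge_atTop 1] with n hn
  have hn1 : (1 : ℝ) ≤ n := by exact_mod_cast hn
  exact rpow_mul_le_mul_scaledAlongPowers hh h0 hp ha (pow_floor_logb_le ha hn1)
    (le_pow_floor_logb_add_one ha (zero_lt_one.trans_le hn1))

theorem eventually_rpow_neg_mul_scaledAlongPowers_le (hh : Antitone h) (h0 : ∀ n, 0 ≤ h n)
    (hp : 0 ≤ p) (ha : 1 < a) :
    ∀ᶠ n : ℕ in atTop,
      a ^ (-p) * scaledAlongPowers h p a (⌊logb a n⌋₊ + 1) ≤ (n : ℝ) ^ p * h n := by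
  filter_upwards [eventually_ge_atTop 1] with n hn
  have hn1 : (1 : ℝ) ≤ n := by exact_mod_cast hn
  exact rpow_neg_mul_scaledAlongPowers_succ_le hh h0 hp ha (pow_floor_logb_le ha hn1)
    (le_pow_floor_logb_add_one ha (zero_lt_one.trans_le hn1))

end Sandwich

section Limits

variable {h : ℕ → ℝ} {p a g : ℝ}

theorem isBoundedUnder_le_of_tendsto_scaledAlongPowers (hh : Antitone h) (h0 : ∀ n, 0 ≤ h n)
    (hp : 0 ≤ p) (ha : 1 < a) (hg : Tendsto (scaledAlongPowers h p a) atTop (𝓝 g)) :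
    IsBoundedUnder (· ≤ ·) atTop fun n : ℕ => (n : ℝ) ^ p * h n :=
  ((hg.comp (tendsto_floor_logb_natCast_atTop ha)).const_mul _).isBoundedUnder_le.mono_le
    (eventually_rpow_mul_le_mul_scaledAlongPowers hh h0 hp ha)

theorem isBoundedUnder_ge_rpow_mul (h0 : ∀ n, 0 ≤ h n) :
    IsBoundedUnder (· ≥ ·) atTop fun n : ℕ => (n : ℝ) ^ p * h n :=
  isBoundedUnder_of_eventually_ge (a := 0) (Eventually.of_forall fun n => by
    have := h0 n
    positivity)

theorem limsup_le_of_tendsto_scaledAlongPowers (hh : Antitone h) (h0 : ∀ n, 0 ≤ h n)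
    (hp : 0 ≤ p) (ha : 1 < a) (hg : Tendsto (scaledAlongPowers h p a) atTop (𝓝 g)) :
    limsup (fun n : ℕ => (n : ℝ) ^ p * h n) atTop ≤ a ^ p * g := by
  have hupper := (hg.comp (tendsto_floor_logb_natCast_atTop ha)).const_mul (a ^ p)
  rw [← hupper.limsup_eq]
  exact limsup_le_limsup (eventually_rpow_mul_le_mul_scaledAlongPowers hh h0 hp ha)
    (isBoundedUnder_ge_rpow_mul h0).isCoboundedUnder_le hupper.isBoundedUnder_le

theorem le_liminf_of_tendsto_scaledAlongPowers (hh : Antitone h) (h0 : ∀ n, 0 ≤ h n)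
    (hp : 0 ≤ p) (ha : 1 < a) (hg : Tendsto (scaledAlongPowers h p a) atTop (𝓝 g)) :
    a ^ (-p) * g ≤ liminf (fun n : ℕ => (n : ℝ) ^ p * h n) atTop := by
  have hlower := (hg.comp ((tendsto_add_atTop_nat 1).comp
    (tendsto_floor_logb_natCast_atTop ha))).const_mul (a ^ (-p))
  rw [← hlower.liminf_eq]
  exact liminf_le_liminf (eventually_rpow_neg_mul_scaledAlongPowers_le hh h0 hp ha)
    hlower.isBoundedUnder_ge
    (isBoundedUnder_le_of_tendsto_scaledAlongPowers hh h0 hp ha hg).isCoboundedUnder_ge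

theorem limsup_le_rpow_mul_liminf_of_tendsto_scaledAlongPowers (hh : Antitone h)
    (h0 : ∀ n, 0 ≤ h n) (hp : 0 ≤ p) (ha : 1 < a)
    (hg : Tendsto (scaledAlongPowers h p a) atTop (𝓝 g)) :
    limsup (fun n : ℕ => (n : ℝ) ^ p * h n) atTop ≤
      a ^ (2 * p) * liminf (fun n : ℕ => (n : ℝ) ^ p * h n) atTop := by
  have ha0 : 0 < a := zero_lt_one.trans ha
  calc limsup (fun n : ℕ => (n : ℝ) ^ p * h n) atTop ≤ a ^ p * g :=
        limsup_le_of_tendsto_scaledAlongPowers hh h0 hp ha hg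
    _ = a ^ (2 * p) * (a ^ (-p) * g) := by
        rw [← mul_assoc, ← rpow_add ha0]
        ring_nf
    _ ≤ a ^ (2 * p) * liminf (fun n : ℕ => (n : ℝ) ^ p * h n) atTop :=
        mul_le_mul_of_nonneg_left (le_liminf_of_tendsto_scaledAlongPowers hh h0 hp ha hg)
          (by positivity)

end Limits

theorem tendsto_liminf_of_limsup_le_rpow_mul_liminf {β : Type*} {f : Filter β} [f.NeBot]
    {u : β → ℝ} {q : ℝ} (hbdd : IsBoundedUnder (· ≤ ·) f u) (hbdd' : IsBoundedUnder (· ≥ ·) f u)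
    (hle : ∀ᶠ a in 𝓝[>] 1, limsup u f ≤ a ^ q * liminf u f) :
    Tendsto u f (𝓝 (liminf u f)) := by
  have hlim : Tendsto (fun a : ℝ => a ^ q * liminf u f) (𝓝[>] 1) (𝓝 (liminf u f)) := by
    have hcont : ContinuousAt (fun a : ℝ => a ^ q * liminf u f) 1 :=
      (continuousAt_id.rpow_const (Or.inl one_ne_zero)).mul continuousAt_const
    simpa using hcont.tendsto.mono_left nhdsWithin_le_nhds
  exact tendsto_of_liminf_eq_limsup rfl
    (le_antisymm (ge_of_tendsto hlim hle) (liminf_le_limsup hbdd hbdd')) hbdd hbdd'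

/-- Reduction step for the asymptotics of `h`: if `h : ℕ → (0,∞)` is non-increasing,
`δ > 1`, and for every `a ∈ (1,2]` the limit `g(a) = lim_m a^{m(δ-1)} h(⌊a^m⌋)` exists
in `(0,∞)`, then `lim_n n^{δ-1} h(n)` exists in `(0,∞)`. -/
theorem limit_along_powers_implies_limit
    (h : ℕ → ℝ) (hpos : ∀ n, 1 ≤ n → 0 < h n) (hmono : Antitone h)
    (δ : ℝ) (hδ : 1 < δ)
    (hg : ∀ a : ℝ, 1 < a → a ≤ 2 → ∃ g : ℝ, 0 < g ∧
      Tendsto (fun m : ℕ => a ^ ((m : ℝ) * (δ - 1)) * h ⌊a ^ m⌋₊) atTop (nhds g)) :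
    ∃ c : ℝ, 0 < c ∧
      Tendsto (fun n : ℕ => (n : ℝ) ^ (δ - 1) * h n) atTop (nhds c) := by
  have hp : 0 ≤ δ - 1 := by linarith
  have h0 : ∀ n, 0 ≤ h n := fun n =>
    (hpos _ (le_max_right n 1)).le.trans (hmono (le_max_left n 1))
  obtain ⟨g, hg0, hg2⟩ := hg 2 one_lt_two le_rfl
  refine ⟨_, ?_, tendsto_liminf_of_limsup_le_rpow_mul_liminf (q := 2 * (δ - 1))
    (isBoundedUnder_le_of_tendsto_scaledAlongPowers hmono h0 hp one_lt_two hg2)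
    (isBoundedUnder_ge_rpow_mul h0) ?_⟩
  · exact (by positivity : (0 : ℝ) < 2 ^ (-(δ - 1)) * g).trans_le
      (le_liminf_of_tendsto_scaledAlongPowers hmono h0 hp one_lt_two hg2)
  · filter_upwards [Ioc_mem_nhdsGT one_lt_two] with a ⟨ha1, ha2⟩
    obtain ⟨_, -, hga⟩ := hg a ha1 ha2
    exact limsup_le_rpow_mul_liminf_of_tendsto_scaledAlongPowers hmono h0 hp ha1 hga
end

section
/- Let 0 < ε < x and let F be the set of continuous functions f: [0,∞) → ℝ with f(0) = x such that, if σ_ε^f := inf{t : f(t) ≤ ε} is finite, then f does not have a local minimum at σ_ε^f. Then the map f ↦ σ_ε^f from D[0,∞) (with the Skorokhod J₁ topology) to [0,∞] is continuous at every f ∈ F. -/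
/-!
Below `σ_ε^f` the continuous function `f` stays above `ε`, hence, by compactness, above `ε + c`
on some `[0, T]` with `T` as close to `σ_ε^f` as we like; uniform convergence on `[0, T]` keeps
`f_n` above `ε` there, so `σ_ε^{f_n}` is eventually at least `T`. Above `σ_ε^f` the absence of a
local minimum gives a time `s`, as close to `σ_ε^f` as we like, with `f s < ε`; pointwise
convergence at `s` gives `f_n s < ε`, so `σ_ε^{f_n}` is eventually at most `s`.
-/

open Filter

/-- The entrance time `σ_ε^f = inf{t ≥ 0 : f(t) ≤ ε}` of `f` into `(-∞, ε]`, valued in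
`[0,∞]` (with `inf ∅ = ∞`). -/
noncomputable def entranceTime (ε : ℝ) (f : ℝ → ℝ) : ENNReal :=
  sInf (ENNReal.ofReal '' {s : ℝ | 0 ≤ s ∧ f s ≤ ε})

open Set

section EntranceTime

variable {ε : ℝ}

lemma entranceTime_le_ofReal {g : ℝ → ℝ} {s : ℝ} (hs : 0 ≤ s) (h : g s ≤ ε) :
    entranceTime ε g ≤ ENNReal.ofReal s :=
  sInf_le ⟨s, ⟨hs, h⟩, rfl⟩

lemma lt_of_ofReal_lt_entranceTime {g : ℝ → ℝ} {T t : ℝ}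
    (hT : ENNReal.ofReal T < entranceTime ε g) (ht : t ∈ Icc 0 T) : ε < g t := by
  by_contra! h
  exact (entranceTime_le_ofReal ht.1 h).not_gt ((ENNReal.ofReal_le_ofReal ht.2).trans_lt hT)

lemma ofReal_le_entranceTime {g : ℝ → ℝ} {T : ℝ} (h : ∀ t ∈ Icc 0 T, ε < g t) :
    ENNReal.ofReal T ≤ entranceTime ε g := by
  refine le_sInf ?_
  rintro _ ⟨s, ⟨hs0, hsε⟩, rfl⟩
  refine ENNReal.ofReal_le_ofReal (le_of_not_gt fun hsT => ?_)
  exact (h s ⟨hs0, hsT.le⟩).not_ge hsε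

lemma exists_lt_ofReal_lt_of_entranceTime_lt {f : ℝ → ℝ}
    (hmin : entranceTime ε f ≠ ⊤ →
      ∀ η : ℝ, 0 < η → ∃ s : ℝ, (entranceTime ε f).toReal < s ∧
        s < (entranceTime ε f).toReal + η ∧ f s < ε)
    {b : ENNReal} (hb : entranceTime ε f < b) :
    ∃ s : ℝ, 0 ≤ s ∧ f s < ε ∧ ENNReal.ofReal s < b := by
  have hσ : entranceTime ε f ≠ ⊤ := hb.ne_top
  obtain ⟨r, -, hσr, hrb⟩ := ENNReal.lt_iff_exists_real_btwn.1 hb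
  have hσr' : (entranceTime ε f).toReal < r := by
    rwa [← ENNReal.ofReal_toReal hσ, ENNReal.ofReal_lt_ofReal_iff_of_nonneg ENNReal.toReal_nonneg]
      at hσr
  obtain ⟨s, hσs, hsr, hfs⟩ := hmin hσ _ (sub_pos.2 hσr')
  refine ⟨s, ENNReal.toReal_nonneg.trans hσs.le, hfs, ?_⟩
  exact (ENNReal.ofReal_le_ofReal (by linarith)).trans_lt hrb

variable {ι : Type*} {l : Filter ι} {f : ℝ → ℝ} {fs : ι → ℝ → ℝ}

lemma eventually_lt_entranceTime (hf : Continuous f)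
    (hconv : ∀ T : ℝ, TendstoUniformlyOn fs f l (Icc 0 T))
    {b : ENNReal} (hb : b < entranceTime ε f) :
    ∀ᶠ i in l, b < entranceTime ε (fs i) := by
  obtain ⟨T, -, hbT, hTσ⟩ := ENNReal.lt_iff_exists_real_btwn.1 hb
  obtain ⟨a, hεa, hfa⟩ := isCompact_Icc.exists_forall_le' hf.continuousOn
    fun t ht => lt_of_ofReal_lt_entranceTime hTσ ht
  have hfsε : ∀ᶠ i in l, ∀ t ∈ Icc 0 T, -fs i t < -ε :=
    (hconv T).neg.eventually_forall_lt (neg_lt_neg hεa) fun t ht => neg_le_neg (hfa t ht)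
  filter_upwards [hfsε] with i hi
  exact hbT.trans_le (ofReal_le_entranceTime fun t ht => neg_lt_neg_iff.1 (hi t ht))

lemma eventually_entranceTime_le_ofReal {s : ℝ} (hs : 0 ≤ s) (hfs : f s < ε)
    (hconv : Tendsto (fun i => fs i s) l (nhds (f s))) :
    ∀ᶠ i in l, entranceTime ε (fs i) ≤ ENNReal.ofReal s := by
  filter_upwards [hconv.eventually_lt_const hfs] with i hi
  exact entranceTime_le_ofReal hs hi.le

end EntranceTime

/-- Since `f` is continuous, Skorokhod `J₁` convergence `f_n → f` amounts to locally uniform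
convergence, which is how it is phrased here. -/
theorem entranceTime_continuous_at_general
    (ε : ℝ)
    (f : ℝ → ℝ) (hf : Continuous f)
    (hmin : entranceTime ε f ≠ ⊤ →
      ∀ η : ℝ, 0 < η → ∃ s : ℝ, (entranceTime ε f).toReal < s ∧
        s < (entranceTime ε f).toReal + η ∧ f s < ε)
    (fs : ℕ → ℝ → ℝ)
    (hconv : ∀ T : ℝ, TendstoUniformlyOn fs f atTop (Set.Icc 0 T)) :
    Tendsto (fun n => entranceTime ε (fs n)) atTop (nhds (entranceTime ε f)) := by
  refine tendsto_order.2 ⟨fun b hb => eventually_lt_entranceTime hf hconv hb, fun b hb => ?_⟩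
  obtain ⟨s, hs0, hfs, hsb⟩ := exists_lt_ofReal_lt_of_entranceTime_lt hmin hb
  filter_upwards [eventually_entranceTime_le_ofReal hs0 hfs
    ((hconv s).tendsto_at ⟨hs0, le_rfl⟩)] with n hn
  exact hn.trans_lt hsb

/-- Continuity of the entrance time `f ↦ σ_ε^f` at a continuous `f` with `f(0) = x > ε`
having no local minimum at `σ_ε^f` (i.e. `f` dips strictly below `ε` in every right
neighborhood of `σ_ε^f`).  Since the limit `f` is continuous, Skorokhod `J₁` convergence
of `f_n` to `f` is equivalent to locally uniform convergence, which is how it is phrased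
here; the conclusion is `σ_ε^{f_n} → σ_ε^f` in `[0,∞]`. -/
theorem entranceTime_continuous_at
    (ε x : ℝ) (hε : 0 < ε) (hεx : ε < x)
    (f : ℝ → ℝ) (hf : Continuous f) (hf0 : f 0 = x)
    (hmin : entranceTime ε f ≠ ⊤ →
      ∀ η : ℝ, 0 < η → ∃ s : ℝ, (entranceTime ε f).toReal < s ∧
        s < (entranceTime ε f).toReal + η ∧ f s < ε)
    (fs : ℕ → ℝ → ℝ)
    (hconv : ∀ T : ℝ, TendstoUniformlyOn fs f atTop (Set.Icc 0 T)) :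
    Tendsto (fun n => entranceTime ε (fs n)) atTop (nhds (entranceTime ε f)) :=
  entranceTime_continuous_at_general ε f hf hmin fs hconv
end
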